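/- Let X be a non-compact Hausdorff space. The following are equivalent: (i) 𝕂(X) has the Hurewicz property; (ii) 𝕂(X) satisfies S_fin(𝒦_{𝕂(X)}, 𝒦_{𝕂(X)}^gp); (iii) X satisfies S_fin(𝒦_X, 𝒦_X) and the groupable k-covers of X are exactly the countable k-covers of X; (iv) X satisfies S_fin(𝒦_X, 𝒦_X^gp); (v) One does not have a winning strategy in the game G_fin(𝒦_X, 𝒦_X^gp). -/

import Mathlib

open Set TopologicalSpace

universe u

/-- A non-trivial open cover: a family of nonempty proper open sets covering `X`. -/
def NTOpenCover (X : Type u) [TopologicalSpace X] (𝒰 : Set (Set X)) : Prop :=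
  (∀ U ∈ 𝒰, IsOpen U ∧ U.Nonempty ∧ U ≠ Set.univ) ∧ ⋃₀ 𝒰 = Set.univ

/-- `𝒪_X`, the collection of non-trivial open covers of `X`. -/
def OX (X : Type u) [TopologicalSpace X] : Set (Set (Set X)) := {𝒰 | NTOpenCover X 𝒰}

/-- The Hurewicz property. -/
def HurewiczProp (X : Type u) [TopologicalSpace X] : Prop :=
  ∀ 𝒰 : ℕ → Set (Set X), (∀ n, 𝒰 n ∈ OX X) →
    ∃ ℱ : ℕ → Set (Set X), (∀ n, ℱ n ⊆ 𝒰 n ∧ (ℱ n).Finite) ∧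
      ∀ x : X, ∃ m : ℕ, ∀ n ≥ m, x ∈ ⋃₀ ℱ n

/-- The selection principle `S_fin(𝒜, ℬ)`. -/
def Sfin {α : Type u} (𝒜 ℬ : Set (Set α)) : Prop :=
  ∀ 𝒰 : ℕ → Set α, (∀ n, 𝒰 n ∈ 𝒜) →
    ∃ ℱ : ℕ → Set α, (∀ n, ℱ n ⊆ 𝒰 n ∧ (ℱ n).Finite) ∧ (⋃ n, ℱ n) ∈ ℬ

/-- The selection principle `S_1(𝒜, ℬ)`. -/
def Sone {α : Type u} (𝒜 ℬ : Set (Set α)) : Prop :=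
  ∀ 𝒰 : ℕ → Set α, (∀ n, 𝒰 n ∈ 𝒜) →
    ∃ f : ℕ → α, (∀ n, f n ∈ 𝒰 n) ∧ Set.range f ∈ ℬ

/-- A member `C` of a collection `ℭ` is groupable if there is a finite-to-one map
`φ : C → ℕ` such that for every infinite `J ⊆ ℕ`, `⋃ {φ⁻¹(n) : n ∈ J} ∈ ℭ`. -/
def Groupable {α : Type u} (ℭ : Set (Set α)) (C : Set α) : Prop :=
  ∃ φ : α → ℕ, (∀ n : ℕ, {x ∈ C | φ x = n}.Finite) ∧
    ∀ J : Set ℕ, J.Infinite → {x ∈ C | φ x ∈ J} ∈ ℭ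

/-- `ℭ^gp`, the collection of groupable members of `ℭ`. -/
def groupables {α : Type u} (ℭ : Set (Set α)) : Set (Set α) :=
  {C | C ∈ ℭ ∧ Groupable ℭ C}

/-- The Menger property. -/
def MengerProp (X : Type u) [TopologicalSpace X] : Prop := Sfin (OX X) (OX X)

/-- The Rothberger property. -/
def RothbergerProp (X : Type u) [TopologicalSpace X] : Prop := Sone (OX X) (OX X)

/-- The Gerlits-Nagy property: Hurewicz and Rothberger. -/
def GerlitsNagyProp (X : Type u) [TopologicalSpace X] : Prop :=
  HurewiczProp X ∧ RothbergerProp X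

/-- `𝒪_X(𝒜)`, the collection of `𝒜`-covers of `X`. -/
def ACovers (X : Type u) [TopologicalSpace X] (𝒜 : Set (Set X)) : Set (Set (Set X)) :=
  {𝒰 | 𝒰 ∈ OX X ∧ ∀ A ∈ 𝒜, ∃ U ∈ 𝒰, A ⊆ U}

/-- `𝒦_X`, the collection of `k`-covers of `X`. -/
def KCovers (X : Type u) [TopologicalSpace X] : Set (Set (Set X)) :=
  {𝒰 | 𝒰 ∈ OX X ∧ ∀ K : Set X, IsCompact K → K.Nonempty → ∃ U ∈ 𝒰, K ⊆ U}

/-- `Ω_X`, the collection of `ω`-covers of `X`. -/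
def OmegaCovers (X : Type u) [TopologicalSpace X] : Set (Set (Set X)) :=
  {𝒰 | 𝒰 ∈ OX X ∧ ∀ F : Set X, F.Finite → F.Nonempty → ∃ U ∈ 𝒰, F ⊆ U}

/-- An ideal of closed sets of `X`. -/
def IdealOfClosedSets (X : Type u) [TopologicalSpace X] (𝒜 : Set (Set X)) : Prop :=
  (∀ A ∈ 𝒜, IsClosed A ∧ A.Nonempty ∧ A ≠ Set.univ) ∧
  (∀ F : Set X, F.Finite → F.Nonempty → F ∈ 𝒜) ∧
  (∀ A B : Set X, A ∈ 𝒜 → B ∈ 𝒜 → A ∪ B ≠ Set.univ → A ∪ B ∈ 𝒜) ∧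
  (∀ A ∈ 𝒜, ∀ B : Set X, B ⊆ A → IsClosed B → B.Nonempty → B ∈ 𝒜)

/-- One has a winning strategy in the Hurewicz game on `X`. -/
def OneWinsHurewicz (X : Type u) [TopologicalSpace X] : Prop :=
  ∃ σ : List (Set (Set X)) → Set (Set X), (∀ s, σ s ∈ OX X) ∧
    ∀ F : ℕ → Set (Set X),
      (∀ n, (F n).Finite ∧ F n ⊆ σ (List.ofFn fun i : Fin n => F i)) →
        ∃ x : X, ∀ m : ℕ, ∃ n ≥ m, x ∉ ⋃₀ F n

/-- One has a winning strategy in `G_fin(𝒜, ℬ)`. -/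
def OneWinsGfin {α : Type u} (𝒜 ℬ : Set (Set α)) : Prop :=
  ∃ σ : List (Set α) → Set α, (∀ s, σ s ∈ 𝒜) ∧
    ∀ F : ℕ → Set α,
      (∀ n, (F n).Finite ∧ F n ⊆ σ (List.ofFn fun i : Fin n => F i)) →
        (⋃ n, F n) ∉ ℬ

/-- One has a winning predetermined strategy in `G_fin(𝒜, ℬ)`. -/
def OneWinsPreGfin {α : Type u} (𝒜 ℬ : Set (Set α)) : Prop :=
  ∃ σ : ℕ → Set α, (∀ n, σ n ∈ 𝒜) ∧
    ∀ F : ℕ → Set α, (∀ n, (F n).Finite ∧ F n ⊆ σ n) → (⋃ n, F n) ∉ ℬ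

/-- One has a winning strategy in `G_1(𝒜, ℬ)`. -/
def OneWinsGone {α : Type u} (𝒜 ℬ : Set (Set α)) : Prop :=
  ∃ σ : List α → Set α, (∀ s, σ s ∈ 𝒜) ∧
    ∀ f : ℕ → α, (∀ n, f n ∈ σ (List.ofFn fun i : Fin n => f i)) → Set.range f ∉ ℬ

/-- One has a winning predetermined strategy in `G_1(𝒜, ℬ)`. -/
def OneWinsPreGone {α : Type u} (𝒜 ℬ : Set (Set α)) : Prop :=
  ∃ σ : ℕ → Set α, (∀ n, σ n ∈ 𝒜) ∧
    ∀ f : ℕ → α, (∀ n, f n ∈ σ n) → Set.range f ∉ ℬ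

/-- The collection `𝒜` of subsets of `X`, viewed as a hyperspace with the Vietoris topology. -/
def Hyper (X : Type u) (𝒜 : Set (Set X)) : Type u := {K : Set X // K ∈ 𝒜}

/-- The Vietoris topology on `Hyper X 𝒜`. -/
instance Hyper.topologicalSpace (X : Type u) [TopologicalSpace X] (𝒜 : Set (Set X)) :
    TopologicalSpace (Hyper X 𝒜) :=
  TopologicalSpace.generateFrom
    {S | ∃ U : Set X, IsOpen U ∧
      (S = {K : Hyper X 𝒜 | K.1 ⊆ U} ∨ S = {K : Hyper X 𝒜 | (K.1 ∩ U).Nonempty})}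

/-- `𝕂(X)`: the nonempty compact subsets of `X` with the Vietoris topology. -/
abbrev HyperK (X : Type u) [TopologicalSpace X] : Type u :=
  Hyper X {K : Set X | IsCompact K ∧ K.Nonempty}

/-- `𝒫_fin(X)`: the nonempty finite subsets of `X` with the Vietoris topology. -/
abbrev PFin (X : Type u) : Type u :=
  Hyper X {F : Set X | F.Finite ∧ F.Nonempty}

/-- `C_p(X)`: continuous real-valued functions with the topology of pointwise convergence
(the subspace topology from the product topology on `X → ℝ`). -/
abbrev Cp (X : Type u) [TopologicalSpace X] : Type u := {f : X → ℝ // Continuous f}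

/-- `C_k(X)`: continuous real-valued functions with the compact-open topology. -/
def Ck (X : Type u) [TopologicalSpace X] : Type u := {f : X → ℝ // Continuous f}

instance Ck.topologicalSpace (X : Type u) [TopologicalSpace X] : TopologicalSpace (Ck X) :=
  TopologicalSpace.generateFrom
    {S | ∃ (K : Set X) (U : Set ℝ), IsCompact K ∧ IsOpen U ∧
      S = {f : Ck X | ∀ x ∈ K, f.1 x ∈ U}}

/-- The constantly zero function in `C_p(X)`. -/
def zeroCp (X : Type u) [TopologicalSpace X] : Cp X := ⟨fun _ => (0 : ℝ), continuous_const⟩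

/-- The constantly zero function in `C_k(X)`. -/
def zeroCk (X : Type u) [TopologicalSpace X] : Ck X := ⟨fun _ => (0 : ℝ), continuous_const⟩

/-- `Ω_{Y,y}`: the sets having `y` in their closure but not containing `y`. -/
def OmegaPt (Y : Type u) [TopologicalSpace Y] (y : Y) : Set (Set Y) :=
  {A | y ∈ closure A ∧ y ∉ A}

/-- Countable fan-tightness. -/
def CountableFanTightness (Y : Type u) [TopologicalSpace Y] : Prop :=
  ∀ y : Y, Sfin (OmegaPt Y y) (OmegaPt Y y)

/-- Countable strong fan-tightness. -/
def CountableStrongFanTightness (Y : Type u) [TopologicalSpace Y] : Prop :=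
  ∀ y : Y, Sone (OmegaPt Y y) (OmegaPt Y y)

/-- The Reznichenko property: every countable member of `Ω_{Y,y}` is groupable. -/
def Reznichenko (Y : Type u) [TopologicalSpace Y] : Prop :=
  ∀ y : Y, ∀ A ∈ OmegaPt Y y, A.Countable → Groupable (OmegaPt Y y) A

/-!
Call `X` k-Hurewicz (`KHurewiczProp`) if from any k-covers `𝒰 n` one can select finite
`ℱ n ⊆ 𝒰 n` such that every compact set lies in a member of `ℱ n` for all large `n`.

The sets `{K | K ⊆ U}` turn k-covers of `X` into k-covers of `𝕂(X)`. Conversely, by a tube lemma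
for the Vietoris topology (an open neighbourhood of `{K | K ⊆ L}`, `L` compact, contains
`{K | K ⊆ U}` for some open `U ⊇ L`), open covers and k-covers of `𝕂(X)` yield k-covers of `X`.
Hence `𝕂(X)` is Hurewicz iff `𝕂(X)` is k-Hurewicz iff `X` is k-Hurewicz.

In any space, being k-Hurewicz is equivalent to `S_fin(𝒦, 𝒦^gp)`, and then the groupable k-covers
are exactly the countable ones. A countable k-cover is grouped by cutting into blocks the indices
selected from the tails of an enumeration. Conversely, in a groupable selection from the common
refinements of `𝒰 0, …, 𝒰 n`, a group whose members all come from stages `≥ m` refines `𝒰 m`.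
Against a strategy of One, Two plays inside countable sub-k-covers; the positions then form a
countable tree, and one k-Hurewicz selection along an enumeration of the tree contains a winning
branch.
-/

open Filter Function

theorem Groupable.countable {α : Type u} {ℭ : Set (Set α)} {C : Set α} (h : Groupable ℭ C) :
    C.Countable := by
  obtain ⟨φ, hφ, -⟩ := h
  exact (countable_iUnion fun n => (hφ n).countable).mono fun U hU =>
    mem_iUnion_of_mem (φ U) (show U ∈ {x ∈ C | φ x = φ U} from ⟨hU, rfl⟩)

theorem Sfin.exists_countable_subset {α : Type u} {𝒜 ℬ : Set (Set α)} (h : Sfin 𝒜 ℬ)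
    {𝒰 : Set α} (h𝒰 : 𝒰 ∈ 𝒜) : ∃ 𝒞 ⊆ 𝒰, 𝒞.Countable ∧ 𝒞 ∈ ℬ := by
  obtain ⟨ℱ, hℱ, hℬ⟩ := h (fun _ => 𝒰) fun _ => h𝒰
  exact ⟨⋃ n, ℱ n, iUnion_subset fun n => (hℱ n).1, countable_iUnion fun n => (hℱ n).2.countable,
    hℬ⟩

theorem Sfin.of_not_oneWinsGfin {α : Type u} {𝒜 ℬ : Set (Set α)} (h : ¬ OneWinsGfin 𝒜 ℬ) :
    Sfin 𝒜 ℬ := by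
  intro 𝒰 h𝒰
  by_contra hS
  push Not at hS
  exact h ⟨fun s => 𝒰 s.length, fun s => h𝒰 _, fun F hF => hS F fun n => by
    simpa only [List.length_ofFn, and_comm] using hF n⟩

theorem exists_blocks {G : ℕ → Set ℕ} (hG : ∀ k, (G k).Finite) (hGk : ∀ k, ∀ i ∈ G k, k ≤ i) :
    ∃ b : ℕ → ℕ, (∀ j, {i | b i = j}.Finite) ∧ ∀ j, ∃ k ≥ j, ∀ i ∈ G k, b i = j := by
  have : ∀ k, ∃ m, k < m ∧ ∀ i ∈ G k, i < m := fun k => by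
    obtain ⟨m, hm⟩ := ((hG k).insert k).bddAbove
    exact ⟨m + 1, Nat.lt_succ_of_le (hm (mem_insert _ _)),
      fun i hi => Nat.lt_succ_of_le (hm (mem_insert_of_mem _ hi))⟩
  choose next hnext_gt hnext using this
  -- block `j` is the interval `[a j, a (j + 1))`
  set a : ℕ → ℕ := fun j => next^[j] 0
  have ha_succ (j : ℕ) : a (j + 1) = next (a j) := iterate_succ_apply' next j 0
  have ha : StrictMono a := strictMono_nat_of_lt_succ fun j => ha_succ j ▸ hnext_gt _
  have hex (i : ℕ) : ∃ j, i < a (j + 1) := ⟨i, Nat.lt_of_lt_of_le (Nat.lt_succ_self i) (ha.id_le _)⟩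
  classical
  refine ⟨fun i => Nat.find (hex i), fun j => (finite_Iio (a (j + 1))).subset fun i hi => ?_,
    fun j => ⟨a j, ha.id_le j, fun i hi => (Nat.find_eq_iff _).2 ⟨ha_succ j ▸ hnext _ i hi,
      fun n hn => not_lt.2 ((ha.monotone hn).trans (hGk _ i hi))⟩⟩⟩
  exact (show Nat.find (hex i) = j from hi) ▸ Nat.find_spec (hex i)

theorem exists_tendsto_atTop_ne {α : Type*} {s : ℕ → Set α} (hs : ∀ n, (s n).Finite)
    (φ : α → ℕ) : ∃ ρ : ℕ → ℕ, Tendsto ρ atTop atTop ∧ ∀ m, ∀ n < m, ∀ x ∈ s n, φ x ≠ ρ m := by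
  choose b hb using fun m => (((finite_Iio m).biUnion fun n _ => hs n).image φ).bddAbove
  refine ⟨fun m => b m + m + 1, tendsto_atTop_mono (fun m => by simp only [id]; omega) tendsto_id,
    fun m n hn x hx => ?_⟩
  have := hb m (mem_image_of_mem φ (mem_biUnion (mem_Iio.2 hn) hx))
  show φ x ≠ b m + m + 1
  omega

-- The position reached through the options `l`, listed newest first: `i :: l` follows `l` by
-- the `i`-th option `move (replay move l) i`.
def replay {β : Type*} (move : List β → ℕ → β) : List ℕ → List β
  | [] => []
  | i :: l => replay move l ++ [move (replay move l) i]

theorem exists_branch {β : Type*} (move : List β → ℕ → β) (R : List ℕ → β)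
    (hR : ∀ l, R l ∈ range (move (replay move l))) :
    ∃ t : ℕ → List ℕ, Injective t ∧
      ∀ n, replay move (t n) = List.ofFn fun i : Fin n => R (t i) := by
  choose next hnext using hR
  let t : ℕ → List ℕ := fun n => Nat.rec [] (fun _ l => next l :: l) n
  have ht_succ (n : ℕ) : t (n + 1) = next (t n) :: t n := rfl
  have ht_len (n : ℕ) : (t n).length = n := by
    induction n with
    | zero => rfl
    | succ n ih => rw [ht_succ, List.length_cons, ih]
  refine ⟨t, fun m n h => by simpa [ht_len] using congrArg List.length h, fun n => ?_⟩
  induction n with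
  | zero => rfl
  | succ n ih => rw [ht_succ, replay, hnext, ih, List.ofFn_succ', List.concat_eq_append]; rfl

section KCovers

variable {Z : Type u} [TopologicalSpace Z]

theorem mem_kCovers_of {𝒰 : Set (Set Z)} (h𝒰 : ∀ U ∈ 𝒰, IsOpen U ∧ U.Nonempty ∧ U ≠ univ)
    (hK : ∀ K : Set Z, IsCompact K → K.Nonempty → ∃ U ∈ 𝒰, K ⊆ U) : 𝒰 ∈ KCovers Z := by
  refine ⟨⟨h𝒰, eq_univ_of_forall fun z => ?_⟩, hK⟩
  obtain ⟨U, hU, hzU⟩ := hK {z} isCompact_singleton (singleton_nonempty z)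
  exact mem_sUnion_of_mem (hzU rfl) hU

theorem iUnion_mem_kCovers {ℱ : ℕ → Set (Set Z)}
    (hℱ : ∀ n, ∀ U ∈ ℱ n, IsOpen U ∧ U.Nonempty ∧ U ≠ univ)
    (hcap : ∀ K : Set Z, IsCompact K → K.Nonempty → ∃ n, ∃ U ∈ ℱ n, K ⊆ U) :
    (⋃ n, ℱ n) ∈ KCovers Z := by
  refine mem_kCovers_of (fun U hU => ?_) fun K hK hne => ?_
  · obtain ⟨n, hn⟩ := mem_iUnion.1 hU
    exact hℱ n U hn
  · obtain ⟨n, U, hU, hKU⟩ := hcap K hK hne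
    exact ⟨U, mem_iUnion_of_mem n hU, hKU⟩

theorem diff_mem_kCovers {𝒰 𝒢 : Set (Set Z)} (h𝒰 : 𝒰 ∈ KCovers Z) (h𝒢 : 𝒢.Finite) :
    𝒰 \ 𝒢 ∈ KCovers Z := by
  refine mem_kCovers_of (fun U hU => h𝒰.1.1 U hU.1) fun K hK hne => ?_
  have : Nonempty Z := ⟨hne.some⟩
  choose! p hp using fun U hU => (ne_univ_iff_exists_notMem U).1 (h𝒰.1.1 U hU).2.2
  -- a member swallowing `K` together with the witnesses `p V ∉ V` cannot be one of the `V ∈ 𝒢`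
  obtain ⟨U, hU, hKU⟩ := h𝒰.2 (K ∪ p '' (𝒢 ∩ 𝒰))
    (hK.union ((h𝒢.inter_of_left 𝒰).image p).isCompact) (hne.mono subset_union_left)
  exact ⟨U, ⟨hU, fun hU𝒢 => hp U hU (hKU (Or.inr ⟨U, ⟨hU𝒢, hU⟩, rfl⟩))⟩,
    subset_union_left.trans hKU⟩

theorem eventually_exists_subset_of_groupable {C : Set (Set Z)} {φ : Set Z → ℕ}
    (hφ : ∀ J : Set ℕ, J.Infinite → {U ∈ C | φ U ∈ J} ∈ KCovers Z) {K : Set Z}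
    (hK : IsCompact K) (hne : K.Nonempty) : ∀ᶠ n in atTop, ∃ U ∈ C, φ U = n ∧ K ⊆ U := by
  rw [← Nat.cofinite_eq_atTop, eventually_cofinite]
  by_contra hinf
  obtain ⟨U, hU, hKU⟩ := (hφ _ hinf).2 K hK hne
  exact hU.2 ⟨U, hU.1, rfl, hKU⟩

theorem groupable_kCovers_of_eventually {C : Set (Set Z)}
    (hC : ∀ U ∈ C, IsOpen U ∧ U.Nonempty ∧ U ≠ univ) (φ : Set Z → ℕ)
    (hφ : ∀ n, {U ∈ C | φ U = n}.Finite)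
    (hev : ∀ K : Set Z, IsCompact K → K.Nonempty → ∀ᶠ n in atTop, ∃ U ∈ C, φ U = n ∧ K ⊆ U) :
    Groupable (KCovers Z) C := by
  refine ⟨φ, hφ, fun J hJ => mem_kCovers_of (fun U hU => hC U hU.1) fun K hK hne => ?_⟩
  obtain ⟨n, ⟨U, hU, rfl, hKU⟩, hn⟩ :=
    ((hev K hK hne).and_frequently (Nat.frequently_atTop_iff_infinite.2 hJ)).exists
  exact ⟨U, ⟨hU, hn⟩, hKU⟩

def commonRefinement (𝒰 : ℕ → Set (Set Z)) (n : ℕ) : Set (Set Z) :=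
  {V | IsOpen V ∧ V.Nonempty ∧ ∀ i ≤ n, ∃ U ∈ 𝒰 i, V ⊆ U}

theorem commonRefinement_mem_kCovers {𝒰 : ℕ → Set (Set Z)} (h𝒰 : ∀ n, 𝒰 n ∈ KCovers Z)
    (n : ℕ) : commonRefinement 𝒰 n ∈ KCovers Z := by
  refine mem_kCovers_of (fun V hV => ⟨hV.1, hV.2.1, fun hV_univ => ?_⟩) fun K hK hne => ?_
  · obtain ⟨U, hU, hVU⟩ := hV.2.2 0 n.zero_le
    exact ((h𝒰 0).1.1 U hU).2.2 (univ_subset_iff.1 (hV_univ ▸ hVU))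
  · choose U hU hKU using fun i => (h𝒰 i).2 K hK hne
    have hKV : K ⊆ ⋂ i ∈ Finset.range (n + 1), U i := subset_iInter₂ fun i _ => hKU i
    refine ⟨⋂ i ∈ Finset.range (n + 1), U i,
      ⟨isOpen_biInter_finset fun i _ => ((h𝒰 i).1.1 _ (hU i)).1, hne.mono hKV, fun i hi =>
        ⟨U i, hU i, biInter_subset_of_mem (Finset.mem_range_succ_iff.2 hi)⟩⟩, hKV⟩

theorem sfin_groupables_of_groupables_eq (hS : Sfin (KCovers Z) (KCovers Z))
    (heq : groupables (KCovers Z) = {𝒰 | 𝒰 ∈ KCovers Z ∧ 𝒰.Countable}) :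
    Sfin (KCovers Z) (groupables (KCovers Z)) := by
  intro 𝒰 h𝒰
  obtain ⟨ℱ, hℱ, hC⟩ := hS 𝒰 h𝒰
  exact ⟨ℱ, hℱ, heq ▸ ⟨hC, countable_iUnion fun n => (hℱ n).2.countable⟩⟩

end KCovers

def KHurewiczProp (X : Type u) [TopologicalSpace X] : Prop :=
  ∀ 𝒰 : ℕ → Set (Set X), (∀ n, 𝒰 n ∈ KCovers X) →
    ∃ ℱ : ℕ → Set (Set X), (∀ n, ℱ n ⊆ 𝒰 n ∧ (ℱ n).Finite) ∧
      ∀ K : Set X, IsCompact K → K.Nonempty → ∀ᶠ n in atTop, ∃ U ∈ ℱ n, K ⊆ U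

namespace KHurewiczProp

variable {Z : Type u} [TopologicalSpace Z]

theorem sfin_kCovers (h : KHurewiczProp Z) : Sfin (KCovers Z) (KCovers Z) := by
  intro 𝒰 h𝒰
  obtain ⟨ℱ, hℱ, hcap⟩ := h 𝒰 h𝒰
  exact ⟨ℱ, hℱ, iUnion_mem_kCovers (fun n U hU => (h𝒰 n).1.1 U ((hℱ n).1 hU))
    fun K hK hne => (hcap K hK hne).exists⟩

theorem groupable_of_countable (h : KHurewiczProp Z) {𝒰 : Set (Set Z)} (h𝒰 : 𝒰 ∈ KCovers Z)
    (hc : 𝒰.Countable) : Groupable (KCovers Z) 𝒰 := by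
  rcases 𝒰.eq_empty_or_nonempty with rfl | hne
  · exact ⟨fun _ => 0, fun _ => by simp, fun J _ => by simpa using h𝒰⟩
  obtain ⟨e, rfl⟩ := hc.exists_eq_range hne
  -- select from the tails of the enumeration `e`: what is selected at stage `k` has index `≥ k`
  obtain ⟨ℱ, hℱ, hcap⟩ := h (fun k => range e \ e '' Iio k)
    fun k => diff_mem_kCovers h𝒰 ((finite_Iio k).image e)
  have he (U : Set Z) (hU : U ∈ range e) : e (invFun e U) = U := invFun_eq hU
  have hidx (k : ℕ) : ∀ i ∈ invFun e '' ℱ k, k ≤ i := by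
    rintro _ ⟨U, hU, rfl⟩
    exact not_lt.1 fun hlt => ((hℱ k).1 hU).2 ⟨_, hlt, he U ((hℱ k).1 hU).1⟩
  obtain ⟨b, hb, hbG⟩ := exists_blocks (fun k => (hℱ k).2.image (invFun e)) hidx
  refine groupable_kCovers_of_eventually h𝒰.1.1 (b ∘ invFun e)
    (fun j => ((hb j).image e).subset fun U hU => ⟨_, hU.2, he U hU.1⟩) fun K hK hne => ?_
  obtain ⟨m, hm⟩ := eventually_atTop.1 (hcap K hK hne)
  refine eventually_atTop.2 ⟨m, fun j hj => ?_⟩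
  obtain ⟨k, hjk, hk⟩ := hbG j
  obtain ⟨U, hU, hKU⟩ := hm k (hj.trans hjk)
  exact ⟨U, ((hℱ k).1 hU).1, hk _ (mem_image_of_mem _ hU), hKU⟩

theorem groupables_eq (h : KHurewiczProp Z) :
    groupables (KCovers Z) = {𝒰 | 𝒰 ∈ KCovers Z ∧ 𝒰.Countable} :=
  ext fun _ => ⟨fun h𝒰 => ⟨h𝒰.1, h𝒰.2.countable⟩,
    fun h𝒰 => ⟨h𝒰.1, h.groupable_of_countable h𝒰.1 h𝒰.2⟩⟩

theorem sfin_groupables (h : KHurewiczProp Z) : Sfin (KCovers Z) (groupables (KCovers Z)) :=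
  sfin_groupables_of_groupables_eq h.sfin_kCovers h.groupables_eq

theorem of_sfin_groupables (h : Sfin (KCovers Z) (groupables (KCovers Z))) :
    KHurewiczProp Z := by
  intro 𝒰 h𝒰
  obtain ⟨ℱ, hℱ, -, φ, hφfin, hφ⟩ := h _ (commonRefinement_mem_kCovers h𝒰)
  obtain ⟨ρ, hρ, hρφ⟩ := exists_tendsto_atTop_ne (fun n => (hℱ n).2) φ
  -- group `ρ m` only contains refinements from stages `n ≥ m`, hence of members of `𝒰 m`
  have hsel (m : ℕ) : ∀ V ∈ {V ∈ ⋃ n, ℱ n | φ V = ρ m}, ∃ U ∈ 𝒰 m, V ⊆ U := by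
    rintro V ⟨hV, hφV⟩
    obtain ⟨n, hn⟩ := mem_iUnion.1 hV
    exact ((hℱ n).1 hn).2.2 m (not_lt.1 fun hnm => hρφ m n hnm V hn hφV)
  choose! u hu hVu using hsel
  refine ⟨fun m => u m '' {V ∈ ⋃ n, ℱ n | φ V = ρ m},
    fun m => ⟨image_subset_iff.2 (hu m), (hφfin _).image _⟩, fun K hK hne => ?_⟩
  filter_upwards [hρ.eventually (eventually_exists_subset_of_groupable hφ hK hne)]
    with m ⟨V, hV, hφV, hKV⟩
  exact ⟨u m V, mem_image_of_mem _ ⟨hV, hφV⟩, hKV.trans (hVu m V ⟨hV, hφV⟩)⟩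

theorem exists_play (h : KHurewiczProp Z) (σ : List (Set (Set Z)) → Set (Set Z))
    (hσ : ∀ s, σ s ∈ KCovers Z) :
    ∃ F : ℕ → Set (Set Z), (∀ n, (F n).Finite ∧ F n ⊆ σ (List.ofFn fun i : Fin n => F i)) ∧
      (⋃ n, F n) ∈ KCovers Z := by
  choose c hcσ hc hcK using fun s => h.sfin_kCovers.exists_countable_subset (hσ s)
  choose enum henum using fun s =>
    (countable_ofPred_finite_subset (hc s)).exists_eq_range ⟨∅, finite_empty, empty_subset _⟩
  obtain ⟨G, hG, hcap⟩ := h (fun k => c (replay enum (Denumerable.ofNat (List ℕ) k))) fun k => hcK _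
  have hGc (l : List ℕ) : G (Encodable.encode l) ⊆ c (replay enum l) ∧
      (G (Encodable.encode l)).Finite := by
    simpa only [Denumerable.ofNat_encode] using hG (Encodable.encode l)
  obtain ⟨t, ht, hplay⟩ := exists_branch enum _ fun l => by
    rw [← henum]
    exact ⟨(hGc l).2, (hGc l).1⟩
  refine ⟨fun n => G (Encodable.encode (t n)), fun n => ⟨(hGc _).2, ?_⟩,
    iUnion_mem_kCovers (fun n U hU => ?_) fun K hK hne => ?_⟩
  · rw [← hplay n]
    exact (hGc _).1.trans (hcσ _)
  · exact (hσ _).1.1 U ((hcσ _) ((hGc _).1 hU))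
  · have : Tendsto (Encodable.encode ∘ t) atTop atTop := by
      rw [← Nat.cofinite_eq_atTop]
      exact (Encodable.encode_injective.comp ht).tendsto_cofinite
    exact (this.eventually (hcap K hK hne)).exists

theorem not_oneWinsGfin (h : KHurewiczProp Z) :
    ¬ OneWinsGfin (KCovers Z) (groupables (KCovers Z)) := by
  rintro ⟨σ, hσ, hwin⟩
  obtain ⟨F, hF, hFK⟩ := h.exists_play σ hσ
  exact hwin F hF (h.groupables_eq ▸ ⟨hFK, countable_iUnion fun n => (hF n).1.countable⟩)

end KHurewiczProp

theorem kHurewiczProp_iff_sfin_groupables {Z : Type u} [TopologicalSpace Z] :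
    KHurewiczProp Z ↔ Sfin (KCovers Z) (groupables (KCovers Z)) :=
  ⟨KHurewiczProp.sfin_groupables, KHurewiczProp.of_sfin_groupables⟩

theorem IsCompact.exists_isOpen_superset_finite_trace {α : Type*} [TopologicalSpace α] {K : Set α}
    (hK : IsCompact K) {𝒲 : Set (Set α)} (h𝒲 : 𝒲.Finite) (ho : ∀ W ∈ 𝒲, IsOpen W) :
    ∃ U, IsOpen U ∧ K ⊆ U ∧ ∀ L ⊆ U, L.Nonempty → ∃ F ⊆ K, F.Finite ∧ F.Nonempty ∧
      ∀ W ∈ 𝒲, (F ⊆ W → L ⊆ W) ∧ ((F ∩ W).Nonempty → (L ∩ W).Nonempty) := by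
  set N : α → Set α := fun x => ⋂₀ {W ∈ 𝒲 | x ∈ W}
  have hN_open x : IsOpen (N x) :=
    (h𝒲.subset fun _ hW => hW.1).isOpen_sInter fun W hW => ho W hW.1
  have hN_subset {x W} (hW : W ∈ 𝒲) (hx : x ∈ W) : N x ⊆ W := sInter_subset_of_mem ⟨hW, hx⟩
  obtain ⟨t, htK, hKt⟩ := hK.elim_nhds_subcover N fun x _ =>
    (hN_open x).mem_nhds (mem_sInter.2 fun _ hW => hW.2)
  refine ⟨⋃ x ∈ t, N x, isOpen_biUnion fun x _ => hN_open x, hKt, fun L hLU ⟨z, hz⟩ => ?_⟩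
  have hcell : ∀ z ∈ L, ∃ x ∈ t, z ∈ N x := fun z hz => by simpa using hLU hz
  refine ⟨{x | x ∈ t ∧ (N x ∩ L).Nonempty}, fun x hx => htK x hx.1,
    t.finite_toSet.subset fun x hx => hx.1, ?_, fun W hW => ⟨fun hFW y hy => ?_, ?_⟩⟩
  · obtain ⟨x, hxt, hzx⟩ := hcell z hz
    exact ⟨x, hxt, z, hzx, hz⟩
  · obtain ⟨x, hxt, hyx⟩ := hcell y hy
    exact hN_subset hW (hFW ⟨hxt, y, hyx, hy⟩) hyx
  · rintro ⟨x, ⟨-, y, hyx, hyL⟩, hxW⟩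
    exact ⟨y, hyL, hN_subset hW hxW hyx⟩

theorem TopologicalSpace.NonemptyCompacts.exists_isOpen_subsets_subset {α : Type*}
    [TopologicalSpace α] {K : Set α} (hK : IsCompact K) {O : Set (NonemptyCompacts α)}
    (hO : IsOpen O) (hKO : {L : NonemptyCompacts α | ↑L ⊆ K} ⊆ O) :
    ∃ U, IsOpen U ∧ K ⊆ U ∧ {L : NonemptyCompacts α | ↑L ⊆ U} ⊆ O := by
  set B : Set (Set α) → Set (NonemptyCompacts α) :=
    fun u => {L | ↑L ⊆ ⋃₀ u ∧ ∀ W ∈ u, (↑L ∩ W).Nonempty}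
  have hbasis : ∀ L ∈ {L : NonemptyCompacts α | ↑L ⊆ K}, ∃ u : Set (Set α),
      u ∈ {u | u.Finite ∧ u.Nonempty ∧ ∀ W ∈ u, IsOpen W} ∧ L ∈ B u ∧ B u ⊆ O := fun L hL => by
    obtain ⟨-, ⟨u, hu, rfl⟩, hLu, huO⟩ :=
      isTopologicalBasis.exists_subset_of_mem_open (hKO hL) hO
    exact ⟨u, hu, hLu, huO⟩
  choose! u hu hLu huO using hbasis
  obtain ⟨t, htK, hKt⟩ := (isCompact_subsets_of_isCompact hK).elim_nhds_subcover (B ∘ u)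
    fun L hL => (isTopologicalBasis.isOpen (mem_image_of_mem _ (hu L hL))).mem_nhds (hLu L hL)
  set 𝒲 := ⋃ L ∈ t, insert (⋃₀ u L) (u L)
  have h𝒲 : 𝒲.Finite := t.finite_toSet.biUnion fun L hL => ((hu L (htK L hL)).1).insert _
  have h𝒲o : ∀ W ∈ 𝒲, IsOpen W := by
    simp only [𝒲, mem_iUnion, mem_insert_iff]
    rintro W ⟨L, hL, rfl | hW⟩
    · exact isOpen_sUnion (hu L (htK L hL)).2.2
    · exact (hu L (htK L hL)).2.2 W hW
  obtain ⟨U, hU, hKU, htrace⟩ := hK.exists_isOpen_superset_finite_trace h𝒲 h𝒲o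
  refine ⟨U, hU, hKU, fun L' hL' => ?_⟩
  obtain ⟨F, hFK, hF, hFne, hFL'⟩ := htrace L' hL' L'.nonempty
  let F' : NonemptyCompacts α := ⟨⟨F, hF.isCompact⟩, hFne⟩
  obtain ⟨L, hLt, hFL⟩ := mem_iUnion₂.1 (hKt (show F' ∈ {L | ↑L ⊆ K} from hFK))
  have hwall : ∀ W ∈ insert (⋃₀ u L) (u L), W ∈ 𝒲 := fun W hW => mem_biUnion hLt hW
  refine huO L (htK L hLt) ⟨(hFL' _ (hwall _ (mem_insert _ _))).1 hFL.1, fun W hW => ?_⟩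
  exact (hFL' W (hwall W (mem_insert_of_mem _ hW))).2 (hFL.2 W hW)

namespace HyperK

variable {X : Type u} [TopologicalSpace X]

attribute [local instance] TopologicalSpace.vietoris in
theorem isInducing_val : Topology.IsInducing fun K : HyperK X => K.1 := by
  refine ⟨?_⟩
  change generateFrom _ = induced _ (generateFrom _)
  rw [induced_generateFrom_eq]
  congr 1
  ext S
  simp only [image_union, image_image, mem_union, mem_image, mem_ofPred_eq]
  constructor
  · rintro ⟨U, hU, h | h⟩
    · exact Or.inl ⟨U, hU, h.symm⟩
    · exact Or.inr ⟨U, hU, h.symm⟩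
  · rintro (⟨U, hU, rfl⟩ | ⟨U, hU, rfl⟩)
    · exact ⟨U, hU, Or.inl rfl⟩
    · exact ⟨U, hU, Or.inr rfl⟩

attribute [local instance] TopologicalSpace.vietoris in
def homeomorph : HyperK X ≃ₜ NonemptyCompacts X where
  toFun K := ⟨⟨K.1, K.2.1⟩, K.2.2⟩
  invFun L := ⟨L, L.isCompact, L.nonempty⟩
  left_inv _ := rfl
  right_inv _ := rfl
  continuous_toFun :=
    NonemptyCompacts.isEmbedding_coe.isInducing.continuous_iff.2 isInducing_val.continuous
  continuous_invFun := isInducing_val.continuous_iff.2 NonemptyCompacts.continuous_coe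

def compactsIn (U : Set X) : Set (HyperK X) := {K | K.1 ⊆ U}

def single (x : X) : HyperK X := ⟨{x}, isCompact_singleton, singleton_nonempty x⟩

theorem single_mem_compactsIn {x : X} {U : Set X} : single x ∈ compactsIn U ↔ x ∈ U :=
  singleton_subset_iff

theorem compactsIn_injective : Injective (compactsIn (X := X)) := fun U V h =>
  ext fun x => by rw [← single_mem_compactsIn, h, single_mem_compactsIn]

theorem isOpen_compactsIn {U : Set X} (hU : IsOpen U) : IsOpen (compactsIn U) :=
  isOpen_generateFrom_of_mem ⟨U, hU, Or.inl rfl⟩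

theorem isCompact_compactsIn {K : Set X} (hK : IsCompact K) : IsCompact (compactsIn K) :=
  homeomorph.isCompact_preimage.2 (NonemptyCompacts.isCompact_subsets_of_isCompact hK)

theorem isCompact_biUnion {𝔎 : Set (HyperK X)} (h𝔎 : IsCompact 𝔎) : IsCompact (⋃ K ∈ 𝔎, K.1) := by
  have := NonemptyCompacts.isCompact_biUnion_coe_of_isCompact (h𝔎.image homeomorph.continuous)
  rwa [biUnion_image] at this

theorem exists_isOpen_compactsIn_subset {K : Set X} (hK : IsCompact K) {O : Set (HyperK X)}
    (hO : IsOpen O) (hKO : compactsIn K ⊆ O) : ∃ U, IsOpen U ∧ K ⊆ U ∧ compactsIn U ⊆ O := by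
  obtain ⟨U, hU, hKU, hUO⟩ := NonemptyCompacts.exists_isOpen_subsets_subset hK
    (homeomorph.symm.isOpen_preimage.2 hO) fun L hL => hKO hL
  exact ⟨U, hU, hKU, fun L hL => hUO (show homeomorph L ∈ _ from hL)⟩

theorem image_compactsIn_mem_kCovers {𝒰 : Set (Set X)} (h𝒰 : 𝒰 ∈ KCovers X) :
    compactsIn '' 𝒰 ∈ KCovers (HyperK X) := by
  refine mem_kCovers_of ?_ fun 𝔎 h𝔎 ⟨K, hK⟩ => ?_
  · rintro _ ⟨U, hU, rfl⟩
    obtain ⟨hUo, ⟨x, hx⟩, hU_univ⟩ := h𝒰.1.1 U hU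
    obtain ⟨y, hy⟩ := (ne_univ_iff_exists_notMem U).1 hU_univ
    exact ⟨isOpen_compactsIn hUo, ⟨single x, single_mem_compactsIn.2 hx⟩,
      fun h => hy (single_mem_compactsIn.1 (h ▸ mem_univ (single y)))⟩
  · obtain ⟨U, hU, h𝔎U⟩ := h𝒰.2 _ (isCompact_biUnion h𝔎) ⟨_, mem_biUnion hK K.2.2.some_mem⟩
    exact ⟨compactsIn U, mem_image_of_mem _ hU, fun L hL => (subset_biUnion_of_mem hL).trans h𝔎U⟩

theorem exists_finite_preimage_compactsIn {𝒰 : ℕ → Set (Set X)}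
    {ℱ : ℕ → Set (Set (HyperK X))} (hℱ : ∀ n, ℱ n ⊆ compactsIn '' 𝒰 n ∧ (ℱ n).Finite) :
    ∃ 𝒢 : ℕ → Set (Set X), (∀ n, 𝒢 n ⊆ 𝒰 n ∧ (𝒢 n).Finite) ∧
      ∀ n, ∀ K ∈ ⋃₀ ℱ n, ∃ U ∈ 𝒢 n, K.1 ⊆ U := by
  refine ⟨fun n => 𝒰 n ∩ compactsIn ⁻¹' ℱ n, fun n => ⟨inter_subset_left,
    ((hℱ n).2.preimage compactsIn_injective.injOn).subset inter_subset_right⟩, ?_⟩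
  rintro n K ⟨V, hV, hKV⟩
  obtain ⟨U, hU, rfl⟩ := (hℱ n).1 hV
  exact ⟨U, ⟨hU, hV⟩, hKV⟩

theorem kHurewiczProp_of_hurewiczProp (h : HurewiczProp (HyperK X)) : KHurewiczProp X := by
  intro 𝒰 h𝒰
  obtain ⟨ℱ, hℱ, hcap⟩ := h _ fun n => (image_compactsIn_mem_kCovers (h𝒰 n)).1
  obtain ⟨𝒢, h𝒢, hsel⟩ := exists_finite_preimage_compactsIn hℱ
  refine ⟨𝒢, h𝒢, fun K hK hne => ?_⟩
  obtain ⟨m, hm⟩ := hcap ⟨K, hK, hne⟩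
  exact eventually_atTop.2 ⟨m, fun n hn => hsel n _ (hm n hn)⟩

theorem kHurewiczProp_of_kHurewiczProp (h : KHurewiczProp (HyperK X)) : KHurewiczProp X := by
  intro 𝒰 h𝒰
  obtain ⟨ℱ, hℱ, hcap⟩ := h _ fun n => image_compactsIn_mem_kCovers (h𝒰 n)
  obtain ⟨𝒢, h𝒢, hsel⟩ := exists_finite_preimage_compactsIn hℱ
  refine ⟨𝒢, h𝒢, fun K hK hne => ?_⟩
  filter_upwards [hcap {⟨K, hK, hne⟩} isCompact_singleton (singleton_nonempty _)]
    with n ⟨V, hV, hKV⟩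
  exact hsel n _ ⟨V, hV, hKV rfl⟩

def baseCover (𝒪 : Set (Set (HyperK X))) : Set (Set X) :=
  {U | IsOpen U ∧ U.Nonempty ∧ U ≠ univ ∧ ∃ V ∈ 𝒪, compactsIn U ⊆ V}

variable [T1Space X]

theorem baseCover_mem_kCovers (hX : ¬ CompactSpace X) {𝒪 : Set (Set (HyperK X))}
    (h𝒪 : ∀ V ∈ 𝒪, IsOpen V)
    (hcov : ∀ K : Set X, IsCompact K → K.Nonempty → ∃ V ∈ 𝒪, compactsIn K ⊆ V) :
    baseCover 𝒪 ∈ KCovers X := by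
  refine mem_kCovers_of (fun U hU => ⟨hU.1, hU.2.1, hU.2.2.1⟩) fun K hK hne => ?_
  obtain ⟨V, hV, hKV⟩ := hcov K hK hne
  obtain ⟨U, hU, hKU, hUV⟩ := exists_isOpen_compactsIn_subset hK (h𝒪 V hV) hKV
  obtain ⟨x, hx⟩ := (ne_univ_iff_exists_notMem K).1 fun h => hX ⟨h ▸ hK⟩
  have hKU' : K ⊆ U ∩ {x}ᶜ := subset_inter hKU (subset_compl_singleton_iff.2 hx)
  exact ⟨U ∩ {x}ᶜ, ⟨hU.inter isOpen_compl_singleton, hne.mono hKU',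
    (ne_univ_iff_exists_notMem _).2 ⟨x, fun h => h.2 rfl⟩, V, hV,
    fun L hL => hUV fun y hy => (hL hy).1⟩, hKU'⟩

theorem _root_.KHurewiczProp.exists_eventually_compactsIn_subset (h : KHurewiczProp X)
    (hX : ¬ CompactSpace X) (𝒪 : ℕ → Set (Set (HyperK X))) (h𝒪 : ∀ n, ∀ V ∈ 𝒪 n, IsOpen V)
    (hcov : ∀ n, ∀ K : Set X, IsCompact K → K.Nonempty → ∃ V ∈ 𝒪 n, compactsIn K ⊆ V) :
    ∃ 𝒢 : ℕ → Set (Set (HyperK X)), (∀ n, 𝒢 n ⊆ 𝒪 n ∧ (𝒢 n).Finite) ∧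
      ∀ K : Set X, IsCompact K → K.Nonempty → ∀ᶠ n in atTop, ∃ V ∈ 𝒢 n, compactsIn K ⊆ V := by
  obtain ⟨ℱ, hℱ, hcap⟩ := h _ fun n => baseCover_mem_kCovers hX (h𝒪 n) (hcov n)
  choose! v hv hUv using fun n U (hU : U ∈ ℱ n) => ((hℱ n).1 hU).2.2.2
  refine ⟨fun n => v n '' ℱ n, fun n => ⟨image_subset_iff.2 (hv n), (hℱ n).2.image _⟩,
    fun K hK hne => ?_⟩
  filter_upwards [hcap K hK hne] with n ⟨U, hU, hKU⟩
  exact ⟨v n U, mem_image_of_mem _ hU, fun L hL => hUv n U hU (show L.1 ⊆ U from hL.trans hKU)⟩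

theorem _root_.KHurewiczProp.hyperK (h : KHurewiczProp X) (hX : ¬ CompactSpace X) :
    KHurewiczProp (HyperK X) := by
  intro 𝒱 h𝒱
  obtain ⟨𝒢, h𝒢, hcap⟩ := h.exists_eventually_compactsIn_subset hX 𝒱
    (fun n V hV => ((h𝒱 n).1.1 V hV).1)
    fun n K hK hne => (h𝒱 n).2 _ (isCompact_compactsIn hK) ⟨⟨K, hK, hne⟩, subset_refl K⟩
  refine ⟨𝒢, h𝒢, fun 𝔎 h𝔎 ⟨L, hL⟩ => ?_⟩
  filter_upwards [hcap _ (isCompact_biUnion h𝔎) ⟨_, mem_biUnion hL L.2.2.some_mem⟩]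
    with n ⟨V, hV, hKV⟩
  exact ⟨V, hV, fun L' hL' => hKV (subset_biUnion_of_mem hL')⟩

theorem _root_.KHurewiczProp.hurewiczProp_hyperK (h : KHurewiczProp X)
    (hX : ¬ CompactSpace X) : HurewiczProp (HyperK X) := by
  intro 𝒪 h𝒪
  have hopen (n : ℕ) : ∀ V ∈ 𝒪 n, IsOpen V := fun V hV => ((h𝒪 n).1 V hV).1
  obtain ⟨𝒢, h𝒢, hcap⟩ := h.exists_eventually_compactsIn_subset hX
    (fun n => sUnion '' {F | F ⊆ 𝒪 n ∧ F.Finite})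
    (by rintro n _ ⟨F, hF, rfl⟩; exact isOpen_sUnion fun V hV => hopen n V (hF.1 hV))
    fun n K hK _ => by
      obtain ⟨F, hF, hFfin, hKF⟩ := (isCompact_compactsIn hK).elim_finite_subcover_image
        (c := id) (hopen n) (by simp [← sUnion_eq_biUnion, (h𝒪 n).2])
      exact ⟨⋃₀ F, mem_image_of_mem _ ⟨hF, hFfin⟩, by rwa [sUnion_eq_biUnion]⟩
  choose! F hF hFV using fun n V (hV : V ∈ 𝒢 n) => (h𝒢 n).1 hV
  refine ⟨fun n => ⋃ V ∈ 𝒢 n, F n V, fun n => ⟨iUnion₂_subset fun V hV => (hF n V hV).1,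
    (h𝒢 n).2.biUnion fun V hV => (hF n V hV).2⟩, fun L => ?_⟩
  obtain ⟨m, hm⟩ := eventually_atTop.1 (hcap L.1 L.2.1 L.2.2)
  refine ⟨m, fun n hn => ?_⟩
  obtain ⟨V, hV, hLV⟩ := hm n hn
  obtain ⟨W, hW, hLW⟩ : L ∈ ⋃₀ F n V := (hFV n V hV).symm ▸ hLV (subset_refl L.1)
  exact ⟨W, mem_biUnion hV hW, hLW⟩

theorem hurewiczProp_iff (hX : ¬ CompactSpace X) : HurewiczProp (HyperK X) ↔ KHurewiczProp X :=
  ⟨kHurewiczProp_of_hurewiczProp, fun h => h.hurewiczProp_hyperK hX⟩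

theorem kHurewiczProp_iff (hX : ¬ CompactSpace X) : KHurewiczProp (HyperK X) ↔ KHurewiczProp X :=
  ⟨kHurewiczProp_of_kHurewiczProp, fun h => h.hyperK hX⟩

end HyperK

theorem statement7 {X : Type u} [TopologicalSpace X] [T2Space X] (hX : ¬ CompactSpace X) :
    List.TFAE
      [HurewiczProp (HyperK X),
       Sfin (KCovers (HyperK X)) (groupables (KCovers (HyperK X))),
       Sfin (KCovers X) (KCovers X) ∧
         groupables (KCovers X) = {𝒰 | 𝒰 ∈ KCovers X ∧ 𝒰.Countable},
       Sfin (KCovers X) (groupables (KCovers X)),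
       ¬ OneWinsGfin (KCovers X) (groupables (KCovers X))] := by
  have hKH : KHurewiczProp X ↔ Sfin (KCovers X) (groupables (KCovers X)) :=
    kHurewiczProp_iff_sfin_groupables
  tfae_have 1 ↔ 4 := (HyperK.hurewiczProp_iff hX).trans hKH
  tfae_have 2 ↔ 4 :=
    kHurewiczProp_iff_sfin_groupables.symm.trans ((HyperK.kHurewiczProp_iff hX).trans hKH)
  tfae_have 3 → 4 := fun h => sfin_groupables_of_groupables_eq h.1 h.2
  tfae_have 4 → 3 := fun h => ⟨(hKH.2 h).sfin_kCovers, (hKH.2 h).groupables_eq⟩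
  tfae_have 4 → 5 := fun h => (hKH.2 h).not_oneWinsGfin
  tfae_have 5 → 4 := Sfin.of_not_oneWinsGfin
  tfae_finish
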